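/- For any vertex switching function ζ : Fin n → ℂ with ‖ζ(i)‖ = 1 for all i, the complex unit hypergraphs G and G^ζ (with incidence function ω^ζ(i,k) = ζ(i)⁻¹ ω(i,k)) are cospectral with respect to A, K, K*, L and L*: each of these matrices for G^ζ has the same characteristic polynomial (hence the same eigenvalues with multiplicity) as the corresponding matrix for G. -/

import Mathlib

open Matrix

/-- Degree of vertex `i`: the number of edges `k` with `ω i k ≠ 0`. -/
noncomputable def deg {n m : ℕ} (ω : Fin n → Fin m → ℂ) (i : Fin n) : ℕ :=
  Nat.card {k : Fin m // ω i k ≠ 0}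

/-- Incidence matrix of a complex unit hypergraph. -/
noncomputable def incM {n m : ℕ} (ω : Fin n → Fin m → ℂ) : Matrix (Fin n) (Fin m) ℂ :=
  Matrix.of ω

/-- Adjacency matrix. -/
noncomputable def adjM {n m : ℕ} (ω : Fin n → Fin m → ℂ) : Matrix (Fin n) (Fin n) ℂ :=
  Matrix.of fun i j => if i = j then 0 else -∑ k, ω i k * (starRingEnd ℂ) (ω j k)

/-- Degree matrix. -/
noncomputable def degM {n m : ℕ} (ω : Fin n → Fin m → ℂ) : Matrix (Fin n) (Fin n) ℂ :=
  Matrix.diagonal fun i => (deg ω i : ℂ)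

/-- Kirchhoff Laplacian `K = D - A`. -/
noncomputable def kirLap {n m : ℕ} (ω : Fin n → Fin m → ℂ) : Matrix (Fin n) (Fin n) ℂ :=
  degM ω - adjM ω

/-- Dual Kirchhoff Laplacian `K* = Bᴴ B`. -/
noncomputable def dualKirLap {n m : ℕ} (ω : Fin n → Fin m → ℂ) :
    Matrix (Fin m) (Fin m) ℂ :=
  (incM ω)ᴴ * incM ω

/-- Normalized Laplacian `L = D⁻¹ K`. -/
noncomputable def normLap {n m : ℕ} (ω : Fin n → Fin m → ℂ) : Matrix (Fin n) (Fin n) ℂ :=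
  (degM ω)⁻¹ * kirLap ω

/-- Dual normalized Laplacian `L* = Bᴴ D⁻¹ B`. -/
noncomputable def dualNormLap {n m : ℕ} (ω : Fin n → Fin m → ℂ) :
    Matrix (Fin m) (Fin m) ℂ :=
  (incM ω)ᴴ * (degM ω)⁻¹ * incM ω

/-! Switching by `ζ` multiplies the incidence matrix on the left by the diagonal unitary
`U = diag ζ⁻¹` and leaves the degrees unchanged. Hence `A`, `K` and `L` are conjugated by
`U` (for `L` because `U` commutes with the diagonal `D⁻¹`), which preserves the characteristic
polynomial, while `K*` and `L*` do not change at all, since `Uᴴ U = 1` and `Uᴴ D⁻¹ U = D⁻¹`. -/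

section Unitary

variable {ι R : Type*} [Fintype ι] [DecidableEq ι] [CommRing R] [StarRing R]
  {U : Matrix ι ι R} (hU : U ∈ unitaryGroup ι R)
include hU

theorem Matrix.charpoly_unitary_conj (M : Matrix ι ι R) :
    (U * M * Uᴴ).charpoly = M.charpoly := by
  rw [charpoly_mul_comm, ← Matrix.mul_assoc, ← star_eq_conjTranspose,
    mem_unitaryGroup_iff'.mp hU, Matrix.one_mul]

theorem Matrix.unitary_conj_of_commute {D : Matrix ι ι R} (h : Commute U D) :
    U * D * Uᴴ = D := by
  rw [h.eq, Matrix.mul_assoc, ← star_eq_conjTranspose, mem_unitaryGroup_iff.mp hU, Matrix.mul_one]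

theorem Matrix.unitary_conjTranspose_conj_of_commute {D : Matrix ι ι R} (h : Commute U D) :
    Uᴴ * D * U = D := by
  rw [Matrix.mul_assoc, ← h.eq, ← Matrix.mul_assoc, ← star_eq_conjTranspose,
    mem_unitaryGroup_iff'.mp hU, Matrix.one_mul]

end Unitary

theorem Matrix.diagonal_mem_unitaryGroup {ι : Type*} [Fintype ι] [DecidableEq ι] {c : ι → ℂ}
    (hc : ∀ i, ‖c i‖ = 1) : diagonal c ∈ unitaryGroup ι ℂ := by
  rw [mem_unitaryGroup_iff, star_eq_conjTranspose, diagonal_conjTranspose, diagonal_mul_diagonal,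
    ← diagonal_one]
  congr 1
  funext i
  simp [Complex.mul_conj, Complex.normSq_eq_norm_sq, hc]

section Switching

variable {n m : ℕ} (c : Fin n → ℂ) (ω : Fin n → Fin m → ℂ)

theorem deg_mul_left {i : Fin n} (hc : c i ≠ 0) : deg (fun i k => c i * ω i k) i = deg ω i :=
  Nat.card_congr <| Equiv.subtypeEquivRight fun k => by simp [hc]

theorem degM_mul_left (hc : ∀ i, c i ≠ 0) : degM (fun i k => c i * ω i k) = degM ω := by
  simp only [degM, deg_mul_left c ω (hc _)]

theorem incM_mul_left : incM (fun i k => c i * ω i k) = diagonal c * incM ω := by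
  ext i k
  simp [incM, diagonal_mul]

theorem adjM_mul_left :
    adjM (fun i k => c i * ω i k) = diagonal c * adjM ω * (diagonal c)ᴴ := by
  ext i j
  rw [diagonal_conjTranspose, mul_diagonal, diagonal_mul]
  by_cases hij : i = j
  · simp [adjM, hij]
  · simp only [adjM, of_apply, if_neg hij, Finset.mul_sum, Finset.sum_mul, map_mul, mul_neg,
      neg_mul, Pi.star_apply, Complex.star_def]
    congr 1
    exact Finset.sum_congr rfl fun k _ => by ring

theorem commute_diagonal_degM : Commute (diagonal c) (degM ω) :=
  commute_diagonal _ _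

theorem commute_diagonal_inv_degM : Commute (diagonal c) (degM ω)⁻¹ := by
  rw [degM, inv_diagonal]
  exact commute_diagonal _ _

variable {c} (hc : ∀ i, ‖c i‖ = 1)
include hc

theorem kirLap_mul_left :
    kirLap (fun i k => c i * ω i k) = diagonal c * kirLap ω * (diagonal c)ᴴ := by
  have hc₀ i : c i ≠ 0 := norm_ne_zero_iff.mp (by simp [hc])
  rw [kirLap, kirLap, degM_mul_left c ω hc₀, adjM_mul_left, Matrix.mul_sub, Matrix.sub_mul,
    unitary_conj_of_commute (diagonal_mem_unitaryGroup hc) (commute_diagonal_degM c ω)]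

theorem normLap_mul_left :
    normLap (fun i k => c i * ω i k) = diagonal c * normLap ω * (diagonal c)ᴴ := by
  have hc₀ i : c i ≠ 0 := norm_ne_zero_iff.mp (by simp [hc])
  rw [normLap, normLap, degM_mul_left c ω hc₀, kirLap_mul_left ω hc, ← Matrix.mul_assoc,
    ← Matrix.mul_assoc, ← (commute_diagonal_inv_degM c ω).eq, Matrix.mul_assoc (diagonal c)]

theorem dualKirLap_mul_left : dualKirLap (fun i k => c i * ω i k) = dualKirLap ω := by
  rw [dualKirLap, dualKirLap, incM_mul_left, conjTranspose_mul, Matrix.mul_assoc,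
    ← Matrix.mul_assoc (diagonal c)ᴴ, ← star_eq_conjTranspose,
    mem_unitaryGroup_iff'.mp (diagonal_mem_unitaryGroup hc), Matrix.one_mul]

theorem dualNormLap_mul_left : dualNormLap (fun i k => c i * ω i k) = dualNormLap ω := by
  have hc₀ i : c i ≠ 0 := norm_ne_zero_iff.mp (by simp [hc])
  rw [dualNormLap, dualNormLap, incM_mul_left, degM_mul_left c ω hc₀, conjTranspose_mul,
    ← Matrix.mul_assoc _ (diagonal c), Matrix.mul_assoc _ (diagonal c)ᴴ,
    Matrix.mul_assoc (incM ω)ᴴ,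
    unitary_conjTranspose_conj_of_commute (diagonal_mem_unitaryGroup hc)
      (commute_diagonal_inv_degM c ω)]

end Switching

theorem stmt11_general (n m : ℕ) (ω : Fin n → Fin m → ℂ)
    (ζ : Fin n → ℂ) (hζ : ∀ i, ‖ζ i‖ = 1) :
    (adjM (fun i k => (ζ i)⁻¹ * ω i k)).charpoly = (adjM ω).charpoly ∧
    (kirLap (fun i k => (ζ i)⁻¹ * ω i k)).charpoly = (kirLap ω).charpoly ∧
    (dualKirLap (fun i k => (ζ i)⁻¹ * ω i k)).charpoly = (dualKirLap ω).charpoly ∧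
    ((∀ i, 0 < deg ω i) →
      (normLap (fun i k => (ζ i)⁻¹ * ω i k)).charpoly = (normLap ω).charpoly ∧
      (dualNormLap (fun i k => (ζ i)⁻¹ * ω i k)).charpoly = (dualNormLap ω).charpoly) := by
  have hc : ∀ i, ‖(ζ i)⁻¹‖ = 1 := by simp [hζ]
  have hU := diagonal_mem_unitaryGroup hc
  refine ⟨?_, ?_, by rw [dualKirLap_mul_left ω hc],
    fun _ => ⟨?_, by rw [dualNormLap_mul_left ω hc]⟩⟩
  · rw [adjM_mul_left]; exact charpoly_unitary_conj hU _
  · rw [kirLap_mul_left ω hc]; exact charpoly_unitary_conj hU _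
  · rw [normLap_mul_left ω hc]; exact charpoly_unitary_conj hU _

/-- `G` and `G^ζ` are cospectral with respect to `A`, `K`, `K*`, `L` and `L*`:
the characteristic polynomials agree. -/
theorem stmt11 (n m : ℕ) (ω : Fin n → Fin m → ℂ)
    (hω : ∀ i k, ω i k = 0 ∨ ‖ω i k‖ = 1)
    (ζ : Fin n → ℂ) (hζ : ∀ i, ‖ζ i‖ = 1) :
    (adjM (fun i k => (ζ i)⁻¹ * ω i k)).charpoly = (adjM ω).charpoly ∧
    (kirLap (fun i k => (ζ i)⁻¹ * ω i k)).charpoly = (kirLap ω).charpoly ∧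
    (dualKirLap (fun i k => (ζ i)⁻¹ * ω i k)).charpoly = (dualKirLap ω).charpoly ∧
    ((∀ i, 0 < deg ω i) →
      (normLap (fun i k => (ζ i)⁻¹ * ω i k)).charpoly = (normLap ω).charpoly ∧
      (dualNormLap (fun i k => (ζ i)⁻¹ * ω i k)).charpoly = (dualNormLap ω).charpoly) :=
  stmt11_general n m ω ζ hζ
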